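/- arXiv:2111.08138 — 4 statements merged into one kernel-verified Lean document; each statement's English description precedes it below -/
import Mathlib

section
/- Let demands d_1,…,d_n ∈ (0,1] and fix δ ∈ [0,1/2]. Choose θ uniformly at random from [0, 1−δ]. Call index i 'bad' if there exists an integer ℓ ≥ 0 with ∑_{j<i} d_j < θ + ℓ(1−δ) ≤ ∑_{j≤i} d_j. Then the probability that index i is bad equals min{1, d_i/(1−δ)}. -/
open MeasureTheory

set_option maxHeartbeats 1000000

/-- Tiling lemma: with tile endpoints `θ + ℓ(1-δ)` (ℓ ≥ 0) and `θ` uniform on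
`[0, 1-δ]`, the probability that index `i` is bad (some tile endpoint lies in
`(∑_{j<i} d_j, ∑_{j≤i} d_j]`) equals `min{1, d_i/(1-δ)}`.  Stated here as: the
Lebesgue measure of the set of bad offsets `θ` equals `(1-δ) ⬝ min{1, d_i/(1-δ)}`. -/
theorem prob_bad_client (n : ℕ) (d : ℕ → ℝ) (δ : ℝ)
    (hd : ∀ j < n, 0 < d j ∧ d j ≤ 1)
    (hδ0 : 0 ≤ δ) (hδ : δ ≤ 1 / 2)
    (i : ℕ) (hi : i < n) :
    volume {θ : ℝ | θ ∈ Set.Icc 0 (1 - δ) ∧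
        ∃ ℓ : ℕ, (∑ j ∈ Finset.range i, d j) < θ + ℓ * (1 - δ) ∧
          θ + ℓ * (1 - δ) ≤ ∑ j ∈ Finset.range (i + 1), d j} =
      ENNReal.ofReal ((1 - δ) * min 1 (d i / (1 - δ))) := by
  have hL0 : (0:ℝ) < 1 - δ := by linarith
  set L : ℝ := 1 - δ with hLdef
  set a : ℝ := ∑ j ∈ Finset.range i, d j with hadef
  have ha0 : 0 ≤ a := Finset.sum_nonneg fun j hj =>
    (hd j (lt_trans (Finset.mem_range.mp hj) hi)).1.le
  have hdi := hd i hi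
  have hb : ∑ j ∈ Finset.range (i+1), d j = a + d i := Finset.sum_range_succ d i
  rw [hb]
  by_cases hcase : L ≤ d i
  · -- every θ in [0,L] is bad
    have hset : {θ : ℝ | θ ∈ Set.Icc 0 L ∧
        ∃ ℓ : ℕ, a < θ + ℓ * L ∧ θ + ℓ * L ≤ a + d i} = Set.Icc 0 L := by
      ext θ
      simp only [Set.mem_setOf_eq, Set.mem_Icc]
      constructor
      · rintro ⟨h, _⟩; exact h
      · rintro ⟨h0, h1⟩
        refine ⟨⟨h0, h1⟩, ?_⟩
        by_cases hθa : a < θ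
        · exact ⟨0, by simpa using hθa, by push_cast; nlinarith⟩
        · push_neg at hθa
          refine ⟨⌊(a - θ)/L⌋₊ + 1, ?_, ?_⟩
          · have h1 := Nat.lt_floor_add_one ((a - θ)/L)
            rw [div_lt_iff₀ hL0] at h1
            push_cast; nlinarith
          · have h1 := Nat.floor_le (show (0:ℝ) ≤ (a - θ)/L from div_nonneg (by linarith) hL0.le)
            rw [le_div_iff₀ hL0] at h1
            push_cast; nlinarith
    rw [hset, Real.volume_Icc]
    have hm : min 1 (d i / L) = 1 := min_eq_left (by rw [le_div_iff₀ hL0]; linarith)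
    rw [hm]; ring_nf
  · push_neg at hcase
    set k : ℕ := ⌊a / L⌋₊ with hkdef
    have hk1 : (k : ℝ) * L ≤ a := by
      have h1 := Nat.floor_le (div_nonneg ha0 hL0.le)
      rw [le_div_iff₀ hL0] at h1; rw [hkdef]; linarith
    have hk2 : a < ((k : ℝ) + 1) * L := by
      have h1 := Nat.lt_floor_add_one (a / L)
      rw [div_lt_iff₀ hL0] at h1; rw [hkdef]; linarith
    set s : ℝ := a - k * L with hsdef
    have hs0 : 0 ≤ s := by simp only [hsdef]; linarith
    have hsL : s < L := by simp only [hsdef]; nlinarith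
    have hset : {θ : ℝ | θ ∈ Set.Icc 0 L ∧
        ∃ ℓ : ℕ, a < θ + ℓ * L ∧ θ + ℓ * L ≤ a + d i} =
        Set.Ioc s (min (s + d i) L) ∪ Set.Icc 0 (s + d i - L) := by
      ext θ
      simp only [Set.mem_setOf_eq, Set.mem_Icc, Set.mem_Ioc, Set.mem_union, le_min_iff]
      constructor
      · rintro ⟨⟨h0, hθL⟩, ℓ, hl, hu⟩
        have hkl : k ≤ ℓ := by
          have h1 : (k : ℝ) * L < ((ℓ : ℝ) + 1) * L := by nlinarith
          have h2 : (k : ℝ) < (ℓ : ℝ) + 1 := lt_of_mul_lt_mul_right h1 hL0.le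
          have h3 : k < ℓ + 1 := by exact_mod_cast h2
          omega
        have hlk : ℓ ≤ k + 1 := by
          have h1 : (ℓ : ℝ) * L < ((k : ℝ) + 2) * L := by nlinarith
          have h2 : (ℓ : ℝ) < (k : ℝ) + 2 := lt_of_mul_lt_mul_right h1 hL0.le
          have h3 : ℓ < k + 2 := by exact_mod_cast h2
          omega
        have hor : ℓ = k ∨ ℓ = k + 1 := by omega
        rcases hor with rfl | rfl
        · left
          constructor
          · simp only [hsdef]; linarith
          · constructor
            · simp only [hsdef]; linarith
            · exact hθL
        · right
          constructor
          · exact h0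
          · have hc : ((k + 1 : ℕ) : ℝ) = (k : ℝ) + 1 := by push_cast; ring
            rw [hc] at hu
            simp only [hsdef]; nlinarith
      · rintro (⟨h1, h2, h3⟩ | ⟨h1, h2⟩)
        · refine ⟨⟨by linarith, h3⟩, k, ?_, ?_⟩
          · simp only [hsdef] at h1; linarith
          · simp only [hsdef] at h2; linarith
        · refine ⟨⟨h1, by linarith⟩, k + 1, ?_, ?_⟩
          · push_cast; simp only [hsdef] at h2 ⊢; nlinarith
          · push_cast; simp only [hsdef] at h2 ⊢; nlinarith
    rw [hset]
    have hdisj : Disjoint (Set.Ioc s (min (s + d i) L)) (Set.Icc 0 (s + d i - L)) := by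
      rw [Set.disjoint_left]
      rintro x ⟨hx1, _⟩ ⟨_, hx2⟩
      linarith
    rw [measure_union (hdisj.symm).symm measurableSet_Icc, Real.volume_Ioc, Real.volume_Icc]
    have hm : min 1 (d i / L) = d i / L := min_eq_right (by rw [div_le_one hL0]; linarith)
    rw [hm]
    have hLd : L * (d i / L) = d i := by field_simp
    rw [hLd]
    by_cases hc2 : s + d i ≤ L
    · rw [min_eq_left hc2]
      have : ENNReal.ofReal (s + d i - L - 0) = 0 := by
        rw [ENNReal.ofReal_eq_zero]; linarith
      rw [this, add_zero]
      congr 1; ring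
    · push_neg at hc2
      have hx : (0:ℝ) ≤ L - s := by linarith
      have hy : (0:ℝ) ≤ s + d i - L := by linarith
      rw [min_eq_right hc2.le, sub_zero, ← ENNReal.ofReal_add hx hy]
      congr 1; ring
end

section
/- (δ-tank lemma, cost bound) Given a TSP tour 𝒜 on V∪{r} and δ ∈ [0,1/2], there exists a feasible CVRP solution whose cost is at most c(𝒜) + (1/(1−δ))·𝒟_small + (2/(1−δ))·𝒟_big − (δ/(1−δ))·𝒟'_big. -/
/-!
Walk along the tour `A` while a tank level, started at some `t`, rises by `σ_v = d_v / (1 - δ)`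
at a small client and by `σ_v = (2 d_v - δ) / (1 - δ)` at a big one, and start a new route
whenever the level crosses an integer. A crossing at `v` costs at most the detour `2 c(r,v)`
through the depot. Feasibility rests on the invariant that the open route carries demand at most
`δ + (1 - δ) · frac(level)`: at a crossing, `v` joins the route being closed if it fits and opens
the next one otherwise, and the extra weight of big clients is what keeps the invariant in the
second case. Averaged over `t ∈ [0, 1)`, the number of crossings at `v` is `σ_v`, so for some `t`
the detours cost at most `∑ 2 c(r,v) σ_v`, which is the claimed bound.
-/

/-- Cost of a walk along a list of vertices: sum of costs of consecutive edges. -/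
def walkCost {α : Type*} (c : α → α → ℝ) : List α → ℝ
  | [] => 0
  | [_] => 0
  | a :: b :: rest => c a b + walkCost c (b :: rest)

/-- Cost of the tour (cycle) that starts at the depot `r`, visits the clients of `T`
in order, and returns to `r`. -/
def tourCost {α : Type*} (c : α → α → ℝ) (r : α) (T : List α) : ℝ :=
  walkCost c (r :: (T ++ [r]))

section TankSplitting

variable {α : Type*}

noncomputable def tankWeight (d : α → ℝ) (δ : ℝ) (v : α) : ℝ :=
  if d v ≤ δ then d v / (1 - δ) else (2 * d v - δ) / (1 - δ)

section tankWeight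

variable (d : α → ℝ) {δ : ℝ} (v : α)

lemma tankWeight_nonneg (hδ0 : 0 ≤ δ) (hδ1 : δ < 1) (hv : 0 ≤ d v) :
    0 ≤ tankWeight d δ v := by
  unfold tankWeight
  split_ifs with h
  · exact div_nonneg hv (by linarith)
  · exact div_nonneg (by linarith [not_le.mp h]) (by linarith)

lemma le_one_sub_mul_tankWeight (hδ1 : δ < 1) : d v ≤ (1 - δ) * tankWeight d δ v := by
  unfold tankWeight
  split_ifs with h
  · rw [mul_div_cancel₀ _ (by linarith)]
  · rw [mul_div_cancel₀ _ (by linarith)]; linarith [not_le.mp h]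

lemma two_mul_sub_le_one_sub_mul_tankWeight (hδ1 : δ < 1) :
    2 * d v - δ ≤ (1 - δ) * tankWeight d δ v := by
  unfold tankWeight
  split_ifs with h
  · rw [mul_div_cancel₀ _ (by linarith)]; linarith
  · rw [mul_div_cancel₀ _ (by linarith)]

lemma sum_mul_tankWeight (V : Finset α) (w : α → ℝ) (hδ1 : δ ≠ 1) :
    ∑ v ∈ V, w v * tankWeight d δ v =
      (1 / (1 - δ)) * ∑ v ∈ V.filter (fun v => d v ≤ δ), d v * w v
        + (2 / (1 - δ)) * ∑ v ∈ V.filter (fun v => δ < d v), d v * w v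
        - (δ / (1 - δ)) * ∑ v ∈ V.filter (fun v => δ < d v), w v := by
  have h1δ : 1 - δ ≠ 0 := sub_ne_zero.mpr hδ1.symm
  rw [← Finset.sum_filter_add_sum_filter_not V (fun v => d v ≤ δ), add_sub_assoc]
  simp only [not_le, Finset.mul_sum, ← Finset.sum_sub_distrib]
  congr 1
  · refine Finset.sum_congr rfl fun v hv => ?_
    rw [tankWeight, if_pos (Finset.mem_filter.mp hv).2]
    field_simp
  · refine Finset.sum_congr rfl fun v hv => ?_
    rw [tankWeight, if_neg (not_le.mpr (Finset.mem_filter.mp hv).2)]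
    field_simp

end tankWeight

noncomputable def crossings (a b : ℝ) : ℤ := ⌊b⌋ - ⌊a⌋

lemma crossings_nonneg {a b : ℝ} (h : a ≤ b) : 0 ≤ crossings a b :=
  sub_nonneg.mpr (Int.floor_le_floor h)

lemma fract_eq_fract_add_sub_crossings (a b : ℝ) :
    Int.fract b = Int.fract a + (b - a) - crossings a b := by
  simp only [crossings, Int.fract, Int.cast_sub]; ring

/-- `q` is the tank level and `acc` the route under construction; a route is closed whenever the
level crosses an integer. -/
noncomputable def tankSplit (d : α → ℝ) (δ : ℝ) : List α → ℝ → List α → List (List α)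
  | [], _, acc => [acc]
  | v :: l, q, acc =>
    if crossings q (q + tankWeight d δ v) = 0 then
      tankSplit d δ l (q + tankWeight d δ v) (acc ++ [v])
    else if crossings q (q + tankWeight d δ v) = 1 then
      if d v ≤ (1 - δ) * (1 - Int.fract q) then
        (acc ++ [v]) :: tankSplit d δ l (q + tankWeight d δ v) []
      else acc :: tankSplit d δ l (q + tankWeight d δ v) [v]
    else acc :: [v] :: tankSplit d δ l (q + tankWeight d δ v) []

section tankSplit

variable (d : α → ℝ) (δ : ℝ)

lemma flatten_tankSplit (l : List α) (q : ℝ) (acc : List α) :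
    (tankSplit d δ l q acc).flatten = acc ++ l := by
  induction l generalizing q acc with
  | nil => simp [tankSplit]
  | cons v l ih =>
    rw [tankSplit]
    split_ifs <;> simp [ih]

variable {δ}

lemma tankSplit_demand_le_one (hδ0 : 0 ≤ δ) (hδ1 : δ < 1) (l : List α)
    (hl : ∀ v ∈ l, d v ≤ 1) (q : ℝ) (acc : List α)
    (hacc : (acc.map d).sum ≤ δ + (1 - δ) * Int.fract q) :
    ∀ T ∈ tankSplit d δ l q acc, (T.map d).sum ≤ 1 := by
  induction l generalizing q acc with
  | nil =>
    simpa [tankSplit] using (by nlinarith [Int.fract_lt_one q] : (acc.map d).sum ≤ 1)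
  | cons v l ih =>
    have hclose : (acc.map d).sum ≤ 1 := by nlinarith [Int.fract_lt_one q]
    obtain ⟨hv, hl⟩ := List.forall_mem_cons.mp hl
    have hσ := le_one_sub_mul_tankWeight d v hδ1
    have hσ' := two_mul_sub_le_one_sub_mul_tankWeight d v hδ1
    have hnext := fract_eq_fract_add_sub_crossings q (q + tankWeight d δ v)
    rw [add_sub_cancel_left] at hnext
    have hempty : (([] : List α).map d).sum ≤ δ + (1 - δ) * Int.fract (q + tankWeight d δ v) := by
      simp only [List.map_nil, List.sum_nil]; nlinarith [Int.fract_nonneg (q + tankWeight d δ v)]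
    intro T hT
    rw [tankSplit] at hT
    split_ifs at hT with h0 h1 hfit
    · refine ih hl _ _ ?_ T hT
      rw [h0, Int.cast_zero, sub_zero] at hnext
      simp only [List.map_append, List.sum_append, List.map_singleton, List.sum_singleton]
      nlinarith
    · rcases List.mem_cons.mp hT with rfl | hT
      · simp only [List.map_append, List.sum_append, List.map_singleton, List.sum_singleton]
        nlinarith
      · exact ih hl _ _ hempty T hT
    · rcases List.mem_cons.mp hT with rfl | hT
      · exact hclose
      · refine ih hl _ _ ?_ T hT
        rw [h1, Int.cast_one] at hnext
        simp only [List.map_singleton, List.sum_singleton]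
        nlinarith
    · rcases List.mem_cons.mp hT with rfl | hT
      · exact hclose
      rcases List.mem_cons.mp hT with rfl | hT
      · simpa using hv
      · exact ih hl _ _ hempty T hT

end tankSplit

section cost

variable (c : α → α → ℝ)

lemma walkCost_cons_append_cons (a : α) (xs : List α) (y : α) (ys : List α) :
    walkCost c (a :: (xs ++ y :: ys)) = walkCost c (a :: (xs ++ [y])) + walkCost c (y :: ys) := by
  induction xs generalizing a with
  | nil => simp [walkCost]
  | cons x xs ih => simp only [List.cons_append, walkCost, ih]; ring

variable {c} (htri : ∀ x y z, c x z ≤ c x y + c y z)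
include htri

lemma walkCost_cons_le_cons (a v : α) (xs : List α) (b : α) :
    walkCost c (a :: (xs ++ [b])) ≤ c a v + walkCost c (v :: (xs ++ [b])) := by
  cases xs with
  | nil => simpa [walkCost] using htri a v b
  | cons x xs => simp only [List.cons_append, walkCost]; linarith [htri a v x]

lemma walkCost_append_le_append (a : α) (xs : List α) (v b : α) :
    walkCost c (a :: (xs ++ [b])) ≤ walkCost c (a :: (xs ++ [v])) + c v b := by
  induction xs generalizing a with
  | nil => simpa [walkCost] using htri a v b
  | cons x xs ih => simp only [List.cons_append, walkCost]; linarith [ih x]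

variable (hsymm : ∀ x y, c x y = c y x)
include hsymm

lemma tourCost_append_singleton_add_le (r v : α) (xs ys : List α) :
    tourCost c r (xs ++ [v]) + tourCost c r ys ≤ tourCost c r (xs ++ v :: ys) + 2 * c r v := by
  have hjoin := walkCost_cons_append_cons c r xs v (ys ++ [r])
  have hleft := walkCost_cons_append_cons c r xs v [r]
  have hright := walkCost_cons_le_cons htri r v ys r
  simp only [tourCost, List.append_assoc, List.cons_append, List.nil_append, walkCost] at *
  linarith [hsymm v r]

lemma tourCost_add_tourCost_cons_le (r v : α) (xs ys : List α) :
    tourCost c r xs + tourCost c r (v :: ys) ≤ tourCost c r (xs ++ v :: ys) + 2 * c r v := by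
  have hjoin := walkCost_cons_append_cons c r xs v (ys ++ [r])
  have hleft := walkCost_append_le_append htri r xs v r
  simp only [tourCost, List.append_assoc, List.cons_append, walkCost] at *
  linarith [hsymm v r]

end cost

noncomputable def crossingCharge (w s : α → ℝ) : List α → ℝ → ℝ
  | [], _ => 0
  | v :: l, q => w v * crossings q (q + s v) + crossingCharge w s l (q + s v)

lemma tankSplit_cost_le {c : α → α → ℝ} (hsymm : ∀ x y, c x y = c y x)
    (htri : ∀ x y z, c x z ≤ c x y + c y z) (hnonneg : ∀ x y, 0 ≤ c x y)
    (r : α) (d : α → ℝ) (δ : ℝ) (l : List α) (hl : ∀ v ∈ l, 0 ≤ tankWeight d δ v)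
    (q : ℝ) (acc : List α) :
    ((tankSplit d δ l q acc).map (tourCost c r)).sum ≤
      tourCost c r (acc ++ l) + crossingCharge (fun v => 2 * c r v) (tankWeight d δ) l q := by
  induction l generalizing q acc with
  | nil => simp [tankSplit, crossingCharge]
  | cons v l ih =>
    obtain ⟨hv, hl⟩ := List.forall_mem_cons.mp hl
    have hafter := tourCost_append_singleton_add_le htri hsymm r v
    have hbefore := tourCost_add_tourCost_cons_le htri hsymm r v
    have ih_empty := ih hl (q + tankWeight d δ v) []
    have ih_single := ih hl (q + tankWeight d δ v) [v]
    have hsolo := hafter [] l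
    simp only [List.nil_append, List.singleton_append] at ih_empty ih_single hsolo
    rw [tankSplit, crossingCharge]
    split_ifs with h0 h1 hfit
    · simpa [h0] using ih hl _ (acc ++ [v])
    · simp only [List.map_cons, List.sum_cons, h1, Int.cast_one, mul_one]
      linarith [hafter acc l]
    · simp only [List.map_cons, List.sum_cons, h1, Int.cast_one, mul_one]
      linarith [hbefore acc l]
    · have hk : (2 : ℝ) ≤ crossings q (q + tankWeight d δ v) := by
        have := crossings_nonneg (le_add_of_nonneg_right (a := q) hv)
        exact_mod_cast (by omega : (2 : ℤ) ≤ crossings q (q + tankWeight d δ v))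
      simp only [List.map_cons, List.sum_cons]
      nlinarith [hbefore acc l, hnonneg r v]

section averaging

open MeasureTheory

lemma integrableOn_floor_add (x : ℝ) :
    IntegrableOn (fun t => (⌊t + x⌋ : ℝ)) (Set.Ico 0 1) := by
  have hmono : Monotone (fun t : ℝ => (⌊t + x⌋ : ℝ)) := fun s t hst =>
    Int.cast_le.mpr (Int.floor_le_floor (add_le_add_left hst x))
  exact ((hmono.monotoneOn _).integrableOn_isCompact isCompact_Icc).mono_set
    Set.Ico_subset_Icc_self

lemma setIntegral_floor_add (x : ℝ) : ∫ t in Set.Ico (0 : ℝ) 1, (⌊t + x⌋ : ℝ) = x := by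
  have hf0 := Int.fract_nonneg x
  have hf1 := Int.fract_lt_one x
  have hsplit : Set.EqOn (fun t => (⌊t + x⌋ : ℝ))
      (fun t => ⌊x⌋ + (Set.Ici (1 - Int.fract x)).indicator 1 t) (Set.Ico 0 1) := by
    rintro t ⟨ht0, ht1⟩
    have hx := Int.floor_add_fract x
    dsimp only
    by_cases ht : 1 - Int.fract x ≤ t
    · rw [Set.indicator_of_mem (Set.mem_Ici.mpr ht)]
      have : ⌊t + x⌋ = ⌊x⌋ + 1 := by rw [Int.floor_eq_iff]; push_cast; constructor <;> linarith
      simp [this]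
    · rw [Set.indicator_of_notMem (mt Set.mem_Ici.mp ht)]
      have : ⌊t + x⌋ = ⌊x⌋ := by rw [Int.floor_eq_iff]; constructor <;> linarith [not_le.mp ht]
      simp [this]
  have hinter : Set.Ico (0 : ℝ) 1 ∩ Set.Ici (1 - Int.fract x) = Set.Ico (1 - Int.fract x) 1 := by
    ext t
    simp only [Set.mem_inter_iff, Set.mem_Ico, Set.mem_Ici]
    constructor
    · rintro ⟨⟨-, ht1⟩, ht⟩
      exact ⟨ht, ht1⟩
    · rintro ⟨ht, ht1⟩
      exact ⟨⟨by linarith, ht1⟩, ht⟩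
  have hconst : IntegrableOn (fun _ => (⌊x⌋ : ℝ)) (Set.Ico (0 : ℝ) 1) :=
    integrableOn_const (by simp)
  have hind : IntegrableOn ((Set.Ici (1 - Int.fract x)).indicator 1) (Set.Ico (0 : ℝ) 1) :=
    (integrableOn_const (C := (1 : ℝ)) (by simp)).indicator measurableSet_Ici
  rw [setIntegral_congr_fun measurableSet_Ico hsplit, integral_add hconst hind,
    setIntegral_const, setIntegral_indicator measurableSet_Ici, hinter]
  simp only [Pi.one_apply, setIntegral_const, smul_eq_mul, Real.volume_real_Ico_of_le zero_le_one,
    Real.volume_real_Ico_of_le (by linarith : 1 - Int.fract x ≤ 1)]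
  linarith [Int.floor_add_fract x]

lemma integrableOn_crossings_add (a b : ℝ) :
    IntegrableOn (fun t => (crossings (t + a) (t + b) : ℝ)) (Set.Ico 0 1) := by
  simp only [crossings, Int.cast_sub]
  exact (integrableOn_floor_add b).sub (integrableOn_floor_add a)

lemma setIntegral_crossings_add (a b : ℝ) :
    ∫ t in Set.Ico (0 : ℝ) 1, (crossings (t + a) (t + b) : ℝ) = b - a := by
  simp only [crossings, Int.cast_sub]
  rw [integral_sub (integrableOn_floor_add b) (integrableOn_floor_add a),
    setIntegral_floor_add, setIntegral_floor_add]

variable (w s : α → ℝ)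

lemma integrableOn_crossingCharge (l : List α) (q : ℝ) :
    IntegrableOn (fun t => crossingCharge w s l (t + q)) (Set.Ico 0 1) := by
  induction l generalizing q with
  | nil => simp [crossingCharge]
  | cons v l ih =>
    simp only [crossingCharge, add_assoc]
    exact ((integrableOn_crossings_add q (q + s v)).const_mul (w v)).add (ih (q + s v))

lemma setIntegral_crossingCharge (l : List α) (q : ℝ) :
    ∫ t in Set.Ico (0 : ℝ) 1, crossingCharge w s l (t + q) = (l.map fun v => w v * s v).sum := by
  induction l generalizing q with
  | nil => simp [crossingCharge]
  | cons v l ih =>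
    simp only [crossingCharge, add_assoc]
    rw [integral_add ((integrableOn_crossings_add q (q + s v)).const_mul (w v))
      (integrableOn_crossingCharge w s l (q + s v)), integral_const_mul, setIntegral_crossings_add,
      ih, List.map_cons, List.sum_cons, add_sub_cancel_left]

lemma exists_crossingCharge_le (l : List α) :
    ∃ t, crossingCharge w s l t ≤ (l.map fun v => w v * s v).sum := by
  have : IsProbabilityMeasure (volume.restrict (Set.Ico (0 : ℝ) 1)) := ⟨by simp⟩
  obtain ⟨t, ht⟩ := exists_le_integral (integrableOn_crossingCharge w s l 0)
  exact ⟨t + 0, ht.trans_eq (setIntegral_crossingCharge w s l 0)⟩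

end averaging

end TankSplitting

theorem delta_tank_lemma_general {α : Type*} [DecidableEq α]
    (V : Finset α) (r : α)
    (c : α → α → ℝ) (d : α → ℝ)
    (hsymm : ∀ x y, c x y = c y x)
    (htri : ∀ x y z, c x z ≤ c x y + c y z)
    (hnonneg : ∀ x y, 0 ≤ c x y)
    (hd : ∀ v ∈ V, 0 < d v ∧ d v ≤ 1)
    (δ : ℝ) (hδ0 : 0 ≤ δ) (hδ : δ ≤ 1 / 2)
    (A : List α) (hA : ∀ v, v ∈ A ↔ v ∈ V) (hAnodup : A.Nodup) :
    ∃ S : List (List α),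
      (∀ v, v ∈ V ↔ v ∈ S.flatten) ∧ S.flatten.Nodup ∧
      (∀ T ∈ S, (T.map d).sum ≤ 1) ∧
      (S.map (tourCost c r)).sum ≤
        tourCost c r A
          + (1 / (1 - δ)) * ∑ v ∈ V.filter (fun v => d v ≤ δ), 2 * d v * c r v
          + (2 / (1 - δ)) * ∑ v ∈ V.filter (fun v => δ < d v), 2 * d v * c r v
          - (δ / (1 - δ)) * ∑ v ∈ V.filter (fun v => δ < d v), 2 * c r v := by
  have hδ1 : δ < 1 := by linarith
  have hdA : ∀ v ∈ A, 0 < d v ∧ d v ≤ 1 := fun v hv => hd v ((hA v).1 hv)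
  obtain ⟨t, ht⟩ := exists_crossingCharge_le (fun v => 2 * c r v) (tankWeight d δ) A
  refine ⟨tankSplit d δ A t [], ?_, ?_, ?_, ?_⟩
  · simp [flatten_tankSplit, hA]
  · simpa [flatten_tankSplit] using hAnodup
  · refine tankSplit_demand_le_one d hδ0 hδ1 A (fun v hv => (hdA v hv).2) t [] ?_
    simpa using add_nonneg hδ0 (mul_nonneg (by linarith) (Int.fract_nonneg t))
  · have hcost := tankSplit_cost_le hsymm htri hnonneg r d δ A
      (fun v hv => tankWeight_nonneg d v hδ0 hδ1 (hdA v hv).1.le) t []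
    have hsum := sum_mul_tankWeight d V (fun v => 2 * c r v) hδ1.ne
    rw [← List.sum_toFinset _ hAnodup, show A.toFinset = V by ext; simp [hA]] at ht
    simp only [List.nil_append] at hcost
    simp only [mul_left_comm (d _), ← mul_assoc] at hsum
    linarith

/-- The δ-tank lemma: given a TSP tour `A` on all the clients and the depot, there is
a feasible CVRP solution of cost at most
`c(A) + (1/(1-δ))·𝒟_small + (2/(1-δ))·𝒟_big − (δ/(1-δ))·𝒟'_big`,
where clients with demand at most `δ` are small and the others are big. -/
theorem delta_tank_lemma {α : Type*} [DecidableEq α]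
    (V : Finset α) (r : α) (hr : r ∉ V)
    (c : α → α → ℝ) (d : α → ℝ)
    (hsymm : ∀ x y, c x y = c y x)
    (htri : ∀ x y z, c x z ≤ c x y + c y z)
    (hnonneg : ∀ x y, 0 ≤ c x y)
    (hself : ∀ x, c x x = 0)
    (hd : ∀ v ∈ V, 0 < d v ∧ d v ≤ 1)
    (δ : ℝ) (hδ0 : 0 ≤ δ) (hδ : δ ≤ 1 / 2)
    (A : List α) (hA : ∀ v, v ∈ A ↔ v ∈ V) (hAnodup : A.Nodup) :
    ∃ S : List (List α),
      (∀ v, v ∈ V ↔ v ∈ S.flatten) ∧ S.flatten.Nodup ∧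
      (∀ T ∈ S, (T.map d).sum ≤ 1) ∧
      (S.map (tourCost c r)).sum ≤
        tourCost c r A
          + (1 / (1 - δ)) * ∑ v ∈ V.filter (fun v => d v ≤ δ), 2 * d v * c r v
          + (2 / (1 - δ)) * ∑ v ∈ V.filter (fun v => δ < d v), 2 * d v * c r v
          - (δ / (1 - δ)) * ∑ v ∈ V.filter (fun v => δ < d v), 2 * c r v :=
  delta_tank_lemma_general V r c d hsymm htri hnonneg hd δ hδ0 hδ A hA hAnodup
end

section
/- The minimum cost of a perfect matching M in the auxiliary graph G_aux on big clients (with δ = 1/3) is at most the optimal CVRP cost: cost(M) ≤ opt. -/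
/-- The vertices covered by a matching given as a list of (possibly degenerate) pairs:
a pair `(u,v)` with `u ≠ v` is an edge covering `u` and `v`, and a pair `(v,v)` is a
loop covering `v`. -/
def matchingEndpoints {α : Type*} [DecidableEq α] (M : List (α × α)) : List α :=
  (M.map fun p => if p.1 = p.2 then [p.1] else [p.1, p.2]).flatten

/-- Cost of a matching in the auxiliary graph: an edge `(u,v)` costs
`c(r,u) + c(u,v) + c(v,r)`; since `c(v,v) = 0`, a loop `(v,v)` costs `2·c(r,v)`. -/
def matchingCost {α : Type*} (c : α → α → ℝ) (r : α) (M : List (α × α)) : ℝ :=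
  (M.map fun p => c r p.1 + c p.1 p.2 + c p.2 r).sum

/-!
Keep, in each tour of the solution, only its big clients. A big client has demand above
`1/3` and a tour carries total demand at most `1`, so at most two big clients remain per
tour; they form one edge of `G_aux` (or a loop, or nothing), whose cost is exactly the
cost of the shortcut tour `r → u → v → r`. By the triangle inequality shortcutting does not
increase the cost of a tour, and the union of these edges over all tours is a perfect
matching on the big clients.
-/

open List

section Shortcut

variable {α : Type*} {c : α → α → ℝ}

theorem walkCost_nonneg (hnonneg : ∀ x y, 0 ≤ c x y) : ∀ l : List α, 0 ≤ walkCost c l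
  | [] | [_] => le_rfl
  | a :: b :: rest => add_nonneg (hnonneg a b) (walkCost_nonneg hnonneg (b :: rest))

theorem walkCost_cons_le_of_sublist (htri : ∀ x y z, c x z ≤ c x y + c y z)
    (hnonneg : ∀ x y, 0 ≤ c x y) {l₁ l₂ : List α} (h : l₁ <+ l₂) (a : α) :
    walkCost c (a :: l₁) ≤ walkCost c (a :: l₂) := by
  induction h generalizing a with
  | slnil => rfl
  | @cons l₁ l₂ b _ ih =>
    cases l₁ with
    | nil => exact walkCost_nonneg hnonneg _
    | cons x t =>
      calc walkCost c (a :: x :: t) = c a x + walkCost c (x :: t) := rfl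
        _ ≤ c a b + (c b x + walkCost c (x :: t)) := by linarith [htri a b x]
        _ ≤ c a b + walkCost c (b :: l₂) := add_le_add le_rfl (ih b)
  | cons_cons b _ ih => exact add_le_add le_rfl (ih b)

theorem tourCost_le_of_sublist (htri : ∀ x y z, c x z ≤ c x y + c y z)
    (hnonneg : ∀ x y, 0 ≤ c x y) (r : α) {T₁ T₂ : List α} (h : T₁ <+ T₂) :
    tourCost c r T₁ ≤ tourCost c r T₂ :=
  walkCost_cons_le_of_sublist htri hnonneg (h.append (Sublist.refl [r])) r

end Shortcut

section PairUp

variable {α : Type*}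

def pairUp : List α → List (α × α)
  | [] => []
  | [v] => [(v, v)]
  | u :: v :: rest => (u, v) :: pairUp rest

theorem pair_sublist_of_mem_pairUp {l : List α} {p : α × α} (hp : p ∈ pairUp l)
    (hne : p.1 ≠ p.2) : [p.1, p.2] <+ l := by
  induction l using pairUp.induct with
  | case1 => simp [pairUp] at hp
  | case2 v =>
    obtain rfl : p = (v, v) := by simpa [pairUp] using hp
    exact absurd rfl hne
  | case3 u v rest ih =>
    rcases mem_cons.1 hp with rfl | hp
    · exact ((nil_sublist rest).cons_cons v).cons_cons u
    · exact ((ih hp).cons v).cons u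

theorem matchingEndpoints_pairUp [DecidableEq α] {l : List α} (hl : l.Nodup) :
    matchingEndpoints (pairUp l) = l := by
  induction l using pairUp.induct with
  | case1 => rfl
  | case2 v => simp [pairUp, matchingEndpoints]
  | case3 u v rest ih =>
    have huv : u ≠ v := fun h => (nodup_cons.1 hl).1 (h ▸ mem_cons_self)
    have hrest : matchingEndpoints (pairUp rest) = rest := ih (hl.sublist (by simp))
    simpa [pairUp, matchingEndpoints, huv] using hrest

theorem matchingCost_pairUp {c : α → α → ℝ} (hself : ∀ x, c x x = 0) (r : α)
    {l : List α} (hl : l.length ≤ 2) : matchingCost c r (pairUp l) = tourCost c r l := by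
  match l, hl with
  | [], _ => simp [matchingCost, pairUp, tourCost, walkCost, hself]
  | [u], _ => simp [matchingCost, pairUp, tourCost, walkCost, hself]
  | [u, v], _ => simp [matchingCost, pairUp, tourCost, walkCost, add_assoc]

end PairUp

section Append

variable {α β : Type*}

theorem matchingEndpoints_append [DecidableEq α] (M N : List (α × α)) :
    matchingEndpoints (M ++ N) = matchingEndpoints M ++ matchingEndpoints N := by
  simp [matchingEndpoints]

theorem matchingCost_append (c : α → α → ℝ) (r : α) (M N : List (α × α)) :
    matchingCost c r (M ++ N) = matchingCost c r M + matchingCost c r N := by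
  simp [matchingCost]

theorem matchingEndpoints_flatMap [DecidableEq α] (f : β → List (α × α)) (L : List β) :
    matchingEndpoints (L.flatMap f) = L.flatMap (matchingEndpoints ∘ f) := by
  induction L with
  | nil => rfl
  | cons T L ih => simp [matchingEndpoints_append, ih]

theorem matchingCost_flatMap (c : α → α → ℝ) (r : α) (f : β → List (α × α))
    (L : List β) :
    matchingCost c r (L.flatMap f) = (L.map (matchingCost c r ∘ f)).sum := by
  induction L with
  | nil => rfl
  | cons T L ih => simp [matchingCost_append, ih]

end Append

theorem length_le_two_of_sum_le_one {l : List ℝ} (hbig : ∀ x ∈ l, 1 / 3 < x)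
    (hsum : l.sum ≤ 1) : l.length ≤ 2 := by
  by_contra! hlen
  have hlt := sum_lt_sum_of_ne_nil (ne_nil_of_length_pos (by omega)) (fun _ => (1 / 3 : ℝ))
    id hbig
  simp only [map_const', sum_replicate, map_id, nsmul_eq_mul] at hlt
  have : (3 : ℝ) ≤ l.length := by exact_mod_cast hlen
  linarith

noncomputable def bigClients {α : Type*} (d : α → ℝ) (T : List α) : List α :=
  T.filter fun v => 1 / 3 < d v

theorem length_bigClients_le_two {α : Type*} {d : α → ℝ} {T : List α}
    (hd : ∀ v ∈ T, 0 ≤ d v) (hcap : (T.map d).sum ≤ 1) : (bigClients d T).length ≤ 2 := by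
  have hbig : ∀ x ∈ (bigClients d T).map d, 1 / 3 < x := by
    simp only [bigClients, mem_map, mem_filter, decide_eq_true_eq]
    rintro _ ⟨v, ⟨-, hv⟩, rfl⟩
    exact hv
  have hsum : ((bigClients d T).map d).sum ≤ (T.map d).sum :=
    (filter_sublist.map d).sum_le_sum (by simpa using hd)
  simpa using length_le_two_of_sum_le_one hbig (hsum.trans hcap)

theorem matching_cost_le_opt_general {α : Type*} [DecidableEq α]
    (V : Finset α) (r : α)
    (c : α → α → ℝ) (d : α → ℝ)
    (htri : ∀ x y z, c x z ≤ c x y + c y z)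
    (hnonneg : ∀ x y, 0 ≤ c x y)
    (hself : ∀ x, c x x = 0)
    (hd : ∀ v ∈ V, 0 < d v ∧ d v ≤ 1)
    (S : List (List α))
    (hcover : ∀ v, v ∈ V ↔ v ∈ S.flatten)
    (hnodup : S.flatten.Nodup)
    (hcap : ∀ T ∈ S, (T.map d).sum ≤ 1) :
    ∃ M : List (α × α),
      (∀ p ∈ M, p.1 ≠ p.2 → d p.1 + d p.2 ≤ 1) ∧
      (matchingEndpoints M).Nodup ∧
      (∀ v, v ∈ matchingEndpoints M ↔ v ∈ V ∧ 1 / 3 < d v) ∧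
      matchingCost c r M ≤ (S.map (tourCost c r)).sum := by
  have hd_nonneg : ∀ T ∈ S, ∀ v ∈ T, 0 ≤ d v := fun T hT v hv =>
    (hd v ((hcover v).2 (mem_flatten.2 ⟨T, hT, hv⟩))).1.le
  have hendpoints : matchingEndpoints (S.flatMap (pairUp ∘ bigClients d)) =
      bigClients d S.flatten := by
    rw [matchingEndpoints_flatMap, bigClients, filter_flatten, flatMap_def]
    refine congrArg flatten (map_congr_left fun T hT => matchingEndpoints_pairUp ?_)
    exact hnodup.sublist (filter_sublist.trans (sublist_flatten_of_mem hT))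
  refine ⟨S.flatMap (pairUp ∘ bigClients d), fun p hp hne => ?_, ?_, fun v => ?_, ?_⟩
  · obtain ⟨T, hT, hpT⟩ := mem_flatMap.1 hp
    have hpair := (pair_sublist_of_mem_pairUp hpT hne).trans filter_sublist
    calc d p.1 + d p.2 = ([p.1, p.2].map d).sum := by simp
      _ ≤ (T.map d).sum := (hpair.map d).sum_le_sum (by simpa using hd_nonneg T hT)
      _ ≤ 1 := hcap T hT
  · exact hendpoints ▸ hnodup.filter _
  · rw [hendpoints, bigClients, mem_filter, ← hcover, decide_eq_true_iff]
  · rw [matchingCost_flatMap]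
    refine sum_le_sum fun T hT => ?_
    calc matchingCost c r (pairUp (bigClients d T))
        = tourCost c r (bigClients d T) :=
          matchingCost_pairUp hself r (length_bigClients_le_two (hd_nonneg T hT) (hcap T hT))
      _ ≤ tourCost c r T := tourCost_le_of_sublist htri hnonneg r filter_sublist

/-- The minimum cost of a perfect matching in the auxiliary graph `G_aux` on the big
clients (demand `> 1/3`) is at most the cost of any feasible CVRP solution; in
particular it is at most `opt`.  Here a perfect matching is a list of edges/loops on
big clients, each pair of matched distinct clients having total demand at most 1,
covering every big client exactly once. -/
theorem matching_cost_le_opt {α : Type*} [DecidableEq α]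
    (V : Finset α) (r : α) (hr : r ∉ V)
    (c : α → α → ℝ) (d : α → ℝ)
    (hsymm : ∀ x y, c x y = c y x)
    (htri : ∀ x y z, c x z ≤ c x y + c y z)
    (hnonneg : ∀ x y, 0 ≤ c x y)
    (hself : ∀ x, c x x = 0)
    (hd : ∀ v ∈ V, 0 < d v ∧ d v ≤ 1)
    (S : List (List α))
    (hcover : ∀ v, v ∈ V ↔ v ∈ S.flatten)
    (hnodup : S.flatten.Nodup)
    (hcap : ∀ T ∈ S, (T.map d).sum ≤ 1) :
    ∃ M : List (α × α),
      (∀ p ∈ M, p.1 ≠ p.2 → d p.1 + d p.2 ≤ 1) ∧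
      (matchingEndpoints M).Nodup ∧
      (∀ v, v ∈ matchingEndpoints M ↔ v ∈ V ∧ 1 / 3 < d v) ∧
      matchingCost c r M ≤ (S.map (tourCost c r)).sum :=
  matching_cost_le_opt_general V r c d htri hnonneg hself hd S hcover hnodup hcap
end

section
/- For any real demands d_1,…,d_n ∈ (0,1], δ ∈ [0,1/2], and any θ ∈ [0,1−δ], the bad indices (those i for which some tile endpoint θ + ℓ(1−δ) lies in (∑_{j<i} d_j, ∑_{j≤i} d_j]) partition the sequence 1,…,n into consecutive blocks each of total demand at most 1, where each block ends at a bad index (or at n) and a bad small client (d_i ≤ δ) can be included at the end of its block. -/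
/-- The bad indices split the clients into consecutive blocks of total demand at
most 1.  With tile endpoints `θ + ℓ(1-δ)` (ℓ ≥ 0), call index `i` bad if some tile
endpoint lies in `(∑_{j<i} d_j, ∑_{j≤i} d_j]`.  If no index strictly between `a` and
`b` is bad, then the clients `a+1, …, b-1` have total demand at most `1-δ`; hence if
moreover `d_b ≤ δ` (a small client appended at the end of the block), the whole block
`a+1, …, b` has total demand at most `1`. -/
theorem bad_indices_give_feasible_blocks (n : ℕ) (d : ℕ → ℝ) (δ θ : ℝ)
    (hd : ∀ j < n, 0 < d j ∧ d j ≤ 1)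
    (hδ0 : 0 ≤ δ) (hδ : δ ≤ 1 / 2)
    (hθ : θ ∈ Set.Icc 0 (1 - δ)) :
    ∀ a b : ℕ, a < b → b < n →
      (∀ j, a < j → j < b →
        ¬ ∃ ℓ : ℕ, (∑ k ∈ Finset.range j, d k) < θ + ℓ * (1 - δ) ∧
            θ + ℓ * (1 - δ) ≤ ∑ k ∈ Finset.range (j + 1), d k) →
      (∑ j ∈ Finset.Ico (a + 1) b, d j ≤ 1 - δ) ∧
      (d b ≤ δ → ∑ j ∈ Finset.Icc (a + 1) b, d j ≤ 1) := by
  intro a b hab hbn hbad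
  obtain ⟨hθ0, hθ1⟩ := hθ
  have hpos : (0:ℝ) < 1 - δ := by linarith
  set S : ℕ → ℝ := fun m => ∑ k ∈ Finset.range m, d k with hSdef
  have main : ∑ j ∈ Finset.Ico (a + 1) b, d j ≤ 1 - δ := by
    by_contra h
    push_neg at h
    have hsum : ∑ j ∈ Finset.Ico (a + 1) b, d j = S b - S (a+1) :=
      Finset.sum_Ico_eq_sub _ (by omega : a + 1 ≤ b)
    rw [hsum] at h
    have hx0 : 0 ≤ S (a+1) := Finset.sum_nonneg (fun k hk => by
      have hk' : k < n := by simp only [Finset.mem_range] at hk; omega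
      linarith [(hd k hk').1])
    obtain ⟨ℓ, hℓ1, hℓ2⟩ : ∃ ℓ : ℕ, S (a+1) < θ + ℓ * (1-δ) ∧
        θ + ℓ * (1-δ) ≤ S (a+1) + (1-δ) := by
      by_cases hc : S (a+1) < θ
      · exact ⟨0, by simpa using hc, by push_cast; linarith⟩
      · push_neg at hc
        set t := (S (a+1) - θ) / (1 - δ) with ht
        have ht0 : 0 ≤ t := div_nonneg (by linarith) (le_of_lt hpos)
        have key : S (a+1) - θ = t * (1-δ) := by
          rw [ht]; field_simp
        have h1 : t < ⌊t⌋₊ + 1 := Nat.lt_floor_add_one t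
        have h2 : (⌊t⌋₊ : ℝ) ≤ t := Nat.floor_le ht0
        refine ⟨⌊t⌋₊ + 1, ?_, ?_⟩
        · push_cast
          nlinarith [mul_lt_mul_of_pos_right h1 hpos]
        · push_cast
          nlinarith [mul_le_mul_of_nonneg_right h2 (le_of_lt hpos)]
    have heb : θ + ℓ * (1-δ) ≤ S b := by linarith
    have hab2 : a + 2 ≤ b := by
      by_contra hc
      have hb : b = a + 1 := by omega
      subst hb
      simp only [sub_self] at h
      linarith
    classical
    have hex : ∃ m, θ + ℓ * (1-δ) ≤ S (a + 2 + m) :=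
      ⟨b - (a+2), by rwa [show a + 2 + (b - (a+2)) = b by omega]⟩
    set m₀ := Nat.find hex with hm0
    have hfind : θ + ℓ * (1-δ) ≤ S (a + 2 + m₀) := Nat.find_spec hex
    have hm0le : m₀ ≤ b - (a+2) :=
      Nat.find_le (by rwa [show a + 2 + (b - (a+2)) = b by omega])
    set j := a + 1 + m₀ with hj
    have hja : a < j := by omega
    have hjb : j < b := by omega
    have hSj : S j < θ + ℓ * (1-δ) := by
      rcases Nat.eq_zero_or_pos m₀ with h0 | hpos'
      · have : j = a + 1 := by omega
        rw [this]; exact hℓ1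
      · have hmin := Nat.find_min hex (show m₀ - 1 < m₀ by omega)
        push_neg at hmin
        rwa [show a + 2 + (m₀ - 1) = j by omega] at hmin
    refine hbad j hja hjb ⟨ℓ, hSj, ?_⟩
    rw [show j + 1 = a + 2 + m₀ by omega]
    exact hfind
  refine ⟨main, fun hdb => ?_⟩
  rw [← Finset.Ico_add_one_right_eq_Icc, Finset.sum_Ico_succ_top (by omega : a + 1 ≤ b)]
  linarith
end
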